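/- Let P be a simplicial poset with vertex set V, let ℓ ≥ 1, and let α ∈ ℤⁿ with −ℓ ≤ αᵢ for all i and with αⱼ > 0 for at least one index j. Then Ext_A^i(A/m_ℓ, A_P)_α = 0 for all i. -/

import Mathlib

open scoped Classical
open MvPolynomial

noncomputable section

def IsSimplicialPoset (P : Type*) [Fintype P] [PartialOrder P] [OrderBot P] : Prop :=
  ∀ y : P, ∃ m : ℕ, Nonempty (Set.Icc (⊥ : P) y ≃o Finset (Fin m))

def MUB {P : Type*} [PartialOrder P] (w y : P) : Set P :=
  {z | z ∈ upperBounds {w, y} ∧ ∀ z' ∈ upperBounds {w, y}, z' ≤ z → z' = z}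

variable (P : Type) [Fintype P] [PartialOrder P] [OrderBot P]
variable (k : Type) [Field k]

/-- The defining ideal of the face ring of a simplicial poset. -/
def faceIdeal : Ideal (MvPolynomial P k) :=
  Ideal.span
    ({f | ∃ w y : P, upperBounds {w, y} = ∅ ∧ f = X w * X y} ∪
     {f | ∃ w y m : P, (upperBounds {w, y}).Nonempty ∧ IsGLB {w, y} m ∧
        f = X w * X y - X m * ∑ z ∈ (Set.toFinite (MUB w y)).toFinset, X z} ∪
     {X (⊥ : P) - 1})

/-- The face ring `A_P = k[P]/I_P` of a simplicial poset. -/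
abbrev FaceRing := MvPolynomial P k ⧸ faceIdeal P k

/-- The class of the variable corresponding to a face `y` in the face ring. -/
def fv (y : P) : FaceRing P k := Ideal.Quotient.mk _ (X y)

/-- `r` is a standard monomial with leading variable `z`: a product of powers of
variables along a strictly decreasing chain starting at `z`, with positive exponents. -/
def IsStdMonLead (r : FaceRing P k) (z : P) : Prop :=
  ∃ (c : ℕ) (w : Fin (c + 1) → P) (p : Fin (c + 1) → ℕ),
    StrictAnti w ∧ (∀ i, 0 < p i) ∧ w 0 = z ∧ r = ∏ i, (fv P k (w i)) ^ (p i)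

variable (n : ℕ) (x : Fin n → P)

/-- The ℤⁿ-graded piece of the face ring of degree `α`, with respect to the atom
labelling `x : Fin n → P`: the span of (classes of) monomials of `k[P]` whose
ℤⁿ-degree (each face `y` contributing `e_i` for every atom `x i ≤ y`) is `α`. -/
def facePiece (α : Fin n → ℤ) : Submodule k (FaceRing P k) :=
  Submodule.span k
    {r | ∃ σ : P →₀ ℕ,
      (∀ j : Fin n, (∑ y ∈ σ.support, if x j ≤ y then (σ y : ℤ) else 0) = α j) ∧
      r = Ideal.Quotient.mk _ (monomial σ (1 : k))}

/-- Cochains of the complex `Hom_A(K_•^ℓ, A_P)`: a free basis of `K_t^ℓ` is indexed by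
`t`-subsets of `Fin n`, so `Hom_A(K_t^ℓ, A_P)` is identified with functions from
`t`-subsets to `A_P`; we take functions on all finite subsets at once. -/
abbrev KCochain := Finset (Fin n) → FaceRing P k

/-- The differential of `Hom_A(K_•^ℓ, A_P)`:
`(df)(G) = Σ_{j ∈ G} (-1)^{|{i ∈ G : i < j}|} x_j^ℓ · f(G \ {j})`. -/
def koszulD (ℓ : ℕ) : KCochain P k n →ₗ[k] KCochain P k n :=
  LinearMap.pi fun G =>
    ∑ j ∈ G, ((-1 : k) ^ ((G.filter fun i => i < j).card)) •
      ((LinearMap.mulLeft k ((fv P k (x j)) ^ ℓ)).comp (LinearMap.proj (G.erase j)))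

/-- The degree-`(t, α)` graded piece of the Koszul cochains: functions supported on
`t`-subsets `G`, with value at `G` in the graded piece of degree `α + ℓ·χ_G`. -/
def gradedKC (ℓ t : ℕ) (α : Fin n → ℤ) : Submodule k (KCochain P k n) :=
  Submodule.pi Set.univ fun G =>
    if G.card = t then facePiece P k n x (fun j => α j + if j ∈ G then (ℓ : ℤ) else 0)
    else ⊥

/-- Cocycles of degree `(t, α)`. -/
def ZK (ℓ t : ℕ) (α : Fin n → ℤ) : Submodule k (KCochain P k n) :=
  LinearMap.ker (koszulD P k n x ℓ) ⊓ gradedKC P k n x ℓ t α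

/-- Coboundaries of degree `(t, α)`. -/
def BK (ℓ t : ℕ) (α : Fin n → ℤ) : Submodule k (KCochain P k n) :=
  Submodule.map (koszulD P k n x ℓ) (gradedKC P k n x ℓ (t - 1) α)

/-- The graded piece `Ext_A^t(A/m_ℓ, A_P)_α`, computed as degree-`(t,α)` cohomology
of the complex `Hom_A(K_•^ℓ, A_P)`. -/
abbrev ExtPiece (ℓ t : ℕ) (α : Fin n → ℤ) :=
  ↥(ZK P k n x ℓ t α) ⧸
    Submodule.comap (ZK P k n x ℓ t α).subtype (BK P k n x ℓ t α)

/-!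
Fix `j` with `α j > 0`. Every summand `A_P(α + ℓ χ_G)` of the complex then has `j`-th degree at
least `1`, and on such pieces multiplication by `x_j^ℓ` is an isomorphism
`A_P(β) ≅ A_P(β + ℓ e_j)`. Pairing the summands at `H` and `H ∪ {j}` through these isomorphisms,
`f ↦ (H ↦ ± x_j^{-ℓ} f(H ∪ {j}))` is a contracting homotopy of the Koszul complex.

Injectivity comes from Stanley's theorem that `A_P` embeds into `∏_y k[x_i : x_i ≤ y]`, which
follows from the straightening law (monomials along chains of faces span `A_P`) and the fact that
such a monomial is recovered from its image under restriction to its top face. Surjectivity also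
comes from straightening: a chain monomial of `j`-degree at least `2` contains faces
`x_j ≤ a ≤ b`, and `y_a y_b = x_j y_{a'} y_b` for the face `a' ≤ a` with vertex set `a ∖ {j}`.
-/

structure IsAtomLabelling {P : Type} [PartialOrder P] [OrderBot P] {n : ℕ} (x : Fin n → P) :
    Prop where
  injective : Function.Injective x
  isAtom : ∀ i, IsAtom (x i)
  exists_eq : ∀ a : P, IsAtom a → ∃ i, x i = a

section VertexSet

variable {P : Type} [PartialOrder P] {n : ℕ} {x : Fin n → P}

def vertexSet (x : Fin n → P) (w : P) : Finset (Fin n) := {i | x i ≤ w}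

@[simp] lemma mem_vertexSet {w : P} {i : Fin n} : i ∈ vertexSet x w ↔ x i ≤ w := by
  simp [vertexSet]

lemma vertexSet_mono {v w : P} (h : v ≤ w) : vertexSet x v ⊆ vertexSet x w :=
  fun _ hi => mem_vertexSet.2 ((mem_vertexSet.1 hi).trans h)

lemma mem_upperBounds_pair {v w z : P} : z ∈ upperBounds {v, w} ↔ v ≤ z ∧ w ≤ z := by
  simp [upperBounds]

variable [OrderBot P]

lemma vertexSet_bot (hx : IsAtomLabelling x) : vertexSet x ⊥ = ∅ :=
  Finset.eq_empty_of_forall_notMem fun i hi =>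
    (hx.isAtom i).ne_bot (le_bot_iff.1 (mem_vertexSet.1 hi))

lemma vertexSet_atom (hx : IsAtomLabelling x) (i : Fin n) : vertexSet x (x i) = {i} := by
  ext l
  simp only [mem_vertexSet, Finset.mem_singleton]
  refine ⟨fun h => hx.injective ?_, fun h => h ▸ le_rfl⟩
  exact ((hx.isAtom i).le_iff.1 h).resolve_left (hx.isAtom l).ne_bot

variable [Fintype P]

/-- The atoms of `[⊥, u] ≅ 2^[m]` are the `x i ≤ u`; this gives the embedding `b`. -/
lemma exists_orderIso_vertexSet_eq_map (hP : IsSimplicialPoset P) (hx : IsAtomLabelling x)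
    (u : P) : ∃ (m : ℕ) (e : Set.Iic u ≃o Finset (Fin m)) (b : Fin m ↪ Fin n),
      ∀ w : Set.Iic u, vertexSet x w = (e w).map b := by
  obtain ⟨m, ⟨e₀⟩⟩ := hP u
  let e : Set.Iic u ≃o Finset (Fin m) := (OrderIso.setCongr _ _ Set.Icc_bot.symm).trans e₀
  have hatom : ∀ r, IsAtom ((e.symm {r} : Set.Iic u) : P) := fun r =>
    ((e.symm.isAtom_iff {r}).2 (Finset.isAtom_singleton r)).of_isAtom_coe_Iic
  choose b hb using fun r => hx.exists_eq _ (hatom r)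
  have hb_inj : Function.Injective b := fun r s h => by
    simpa using e.symm.injective (Subtype.ext ((hb r).symm.trans ((congrArg x h).trans (hb s))))
  refine ⟨m, e, ⟨b, hb_inj⟩, fun w => ?_⟩
  ext i
  simp only [mem_vertexSet, Finset.mem_map, Function.Embedding.coeFn_mk]
  constructor
  · intro hi
    have hiu : x i ≤ u := hi.trans w.2
    obtain ⟨r, hr⟩ :=
      Finset.isAtom_iff.1 ((e.isAtom_iff ⟨x i, hiu⟩).2 ((hx.isAtom i).Iic hiu))
    have hxr : x (b r) = x i := by
      rw [hb, ← hr, OrderIso.symm_apply_apply]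
    refine ⟨r, ?_, hx.injective hxr⟩
    rw [← Finset.singleton_subset_iff, ← hr]
    exact e.monotone (Subtype.mk_le_mk.2 hi)
  · rintro ⟨r, hr, rfl⟩
    rw [hb]
    exact e.symm_apply_le.2 (Finset.singleton_subset_iff.2 hr)

lemma vertexSet_subset_vertexSet_iff (hP : IsSimplicialPoset P) (hx : IsAtomLabelling x)
    {u v w : P} (hv : v ≤ u) (hw : w ≤ u) : vertexSet x v ⊆ vertexSet x w ↔ v ≤ w := by
  obtain ⟨m, e, b, hb⟩ := exists_orderIso_vertexSet_eq_map hP hx u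
  rw [hb ⟨v, hv⟩, hb ⟨w, hw⟩, Finset.map_subset_map]
  exact e.le_iff_le

lemma exists_le_vertexSet_eq (hP : IsSimplicialPoset P) (hx : IsAtomLabelling x) {u : P}
    {S : Finset (Fin n)} (hS : S ⊆ vertexSet x u) : ∃ z ≤ u, vertexSet x z = S := by
  obtain ⟨m, e, b, hb⟩ := exists_orderIso_vertexSet_eq_map hP hx u
  rw [show u = ((⊤ : Set.Iic u) : P) from rfl, hb, Finset.subset_map_iff] at hS
  obtain ⟨T, -, rfl⟩ := hS
  exact ⟨e.symm T, (e.symm T).2, by rw [hb, OrderIso.apply_symm_apply]⟩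

lemma eq_of_vertexSet_eq (hP : IsSimplicialPoset P) (hx : IsAtomLabelling x) {u v w : P}
    (hv : v ≤ u) (hw : w ≤ u) (h : vertexSet x v = vertexSet x w) : v = w :=
  le_antisymm ((vertexSet_subset_vertexSet_iff hP hx hv hw).1 h.le)
    ((vertexSet_subset_vertexSet_iff hP hx hw hv).1 h.ge)

lemma vertexSet_nonempty (hP : IsSimplicialPoset P) (hx : IsAtomLabelling x) {w : P}
    (hw : w ≠ ⊥) : (vertexSet x w).Nonempty := by
  rw [Finset.nonempty_iff_ne_empty, ← vertexSet_bot hx]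
  exact fun h => hw (eq_of_vertexSet_eq hP hx le_rfl bot_le h)

lemma exists_isGLB_vertexSet_eq_inter (hP : IsSimplicialPoset P) (hx : IsAtomLabelling x)
    {u v w : P} (hv : v ≤ u) (hw : w ≤ u) :
    ∃ m, IsGLB {v, w} m ∧ vertexSet x m = vertexSet x v ∩ vertexSet x w := by
  obtain ⟨m, hmu, hm⟩ :=
    exists_le_vertexSet_eq hP hx (Finset.inter_subset_left.trans (vertexSet_mono hv))
  have hle : ∀ {l}, l ≤ u → (l ≤ m ↔ l ≤ v ∧ l ≤ w) := fun hl => by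
    rw [← vertexSet_subset_vertexSet_iff hP hx hl hmu, hm, Finset.subset_inter_iff,
      ← vertexSet_subset_vertexSet_iff hP hx hl hv,
      ← vertexSet_subset_vertexSet_iff hP hx hl hw]
  refine ⟨m, ⟨?_, fun l hl => ?_⟩, hm⟩
  · have := (hle hmu).1 le_rfl
    simp [lowerBounds, this.1, this.2]
  · have hl' : l ≤ v ∧ l ≤ w := ⟨hl (by simp), hl (by simp)⟩
    exact (hle (hl'.1.trans hv)).2 hl'

lemma vertexSet_eq_union_of_mem_MUB (hP : IsSimplicialPoset P) (hx : IsAtomLabelling x)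
    {v w z : P} (hz : z ∈ MUB v w) : vertexSet x z = vertexSet x v ∪ vertexSet x w := by
  obtain ⟨hub, hmin⟩ := hz
  obtain ⟨hvz, hwz⟩ := mem_upperBounds_pair.1 hub
  obtain ⟨z₀, hz₀z, hz₀⟩ :=
    exists_le_vertexSet_eq hP hx (Finset.union_subset (vertexSet_mono hvz) (vertexSet_mono hwz))
  have hub₀ : z₀ ∈ upperBounds {v, w} := mem_upperBounds_pair.2
    ⟨(vertexSet_subset_vertexSet_iff hP hx hvz hz₀z).1 (hz₀ ▸ Finset.subset_union_left),
      (vertexSet_subset_vertexSet_iff hP hx hwz hz₀z).1 (hz₀ ▸ Finset.subset_union_right)⟩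
  rw [← hmin z₀ hub₀ hz₀z, hz₀]

lemma mem_MUB_of_vertexSet_eq_union (hP : IsSimplicialPoset P) (hx : IsAtomLabelling x)
    {v w z : P} (hub : z ∈ upperBounds {v, w})
    (hz : vertexSet x z = vertexSet x v ∪ vertexSet x w) : z ∈ MUB v w := by
  refine ⟨hub, fun z' hz' hz'z => eq_of_vertexSet_eq hP hx hz'z le_rfl ?_⟩
  obtain ⟨hv, hw⟩ := mem_upperBounds_pair.1 hz'
  exact (vertexSet_mono hz'z).antisymm
    (hz ▸ Finset.union_subset (vertexSet_mono hv) (vertexSet_mono hw))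

lemma exists_mem_MUB_le (hP : IsSimplicialPoset P) (hx : IsAtomLabelling x) {u v w : P}
    (hv : v ≤ u) (hw : w ≤ u) : ∃ z ∈ MUB v w, z ≤ u := by
  obtain ⟨z, hzu, hz⟩ :=
    exists_le_vertexSet_eq hP hx (Finset.union_subset (vertexSet_mono hv) (vertexSet_mono hw))
  refine ⟨z, mem_MUB_of_vertexSet_eq_union hP hx (mem_upperBounds_pair.2 ⟨?_, ?_⟩) hz, hzu⟩
  · exact (vertexSet_subset_vertexSet_iff hP hx hv hzu).1 (hz ▸ Finset.subset_union_left)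
  · exact (vertexSet_subset_vertexSet_iff hP hx hw hzu).1 (hz ▸ Finset.subset_union_right)

lemma eq_of_mem_MUB_of_le (hP : IsSimplicialPoset P) (hx : IsAtomLabelling x)
    {u v w z₁ z₂ : P} (h₁ : z₁ ∈ MUB v w) (h₂ : z₂ ∈ MUB v w) (hu₁ : z₁ ≤ u)
    (hu₂ : z₂ ≤ u) : z₁ = z₂ :=
  eq_of_vertexSet_eq hP hx hu₁ hu₂ ((vertexSet_eq_union_of_mem_MUB hP hx h₁).trans
    (vertexSet_eq_union_of_mem_MUB hP hx h₂).symm)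

end VertexSet

lemma Finsupp.exists_eq_single_add_single_add {α : Type*} {σ : α →₀ ℕ} {a b : α}
    (ha : a ∈ σ.support) (hb : b ∈ (σ - Finsupp.single a 1).support) :
    ∃ ρ, σ = Finsupp.single a 1 + Finsupp.single b 1 + ρ := by
  have ha' : Finsupp.single a 1 ≤ σ :=
    Finsupp.single_le_iff.2 (Nat.one_le_iff_ne_zero.2 (Finsupp.mem_support_iff.1 ha))
  have hb' : Finsupp.single b 1 ≤ σ - Finsupp.single a 1 :=
    Finsupp.single_le_iff.2 (Nat.one_le_iff_ne_zero.2 (Finsupp.mem_support_iff.1 hb))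
  exact exists_add_of_le ((le_tsub_iff_left ha').1 hb')


section FineDegree

variable {P : Type} [PartialOrder P] {n : ℕ} {x : Fin n → P}

def fineDeg (x : Fin n → P) : (P →₀ ℕ) →ₗ[ℕ] (Fin n →₀ ℕ) :=
  Finsupp.linearCombination ℕ fun w => ∑ i ∈ vertexSet x w, Finsupp.single i 1

lemma fineDeg_single (w : P) (p : ℕ) :
    fineDeg x (Finsupp.single w p) = p • ∑ i ∈ vertexSet x w, Finsupp.single i 1 :=
  Finsupp.linearCombination_single ℕ p w

lemma fineDeg_apply (σ : P →₀ ℕ) (j : Fin n) :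
    fineDeg x σ j = ∑ w ∈ σ.support, if x j ≤ w then σ w else 0 := by
  simp [fineDeg, Finsupp.linearCombination_apply, Finsupp.sum, Finsupp.finsetSum_apply,
    Finsupp.single_apply]

lemma fineDeg_single_one_apply (w : P) (j : Fin n) :
    fineDeg x (Finsupp.single w 1) j = if x j ≤ w then 1 else 0 := by
  simp [fineDeg_single, Finsupp.finsetSum_apply, Finsupp.single_apply]

lemma le_fineDeg_apply (σ : P →₀ ℕ) {w : P} {j : Fin n} (hj : x j ≤ w) :
    σ w ≤ fineDeg x σ j := by
  by_cases hw : w ∈ σ.support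
  · rw [fineDeg_apply]
    exact (if_pos hj).symm.le.trans
      (Finset.single_le_sum (f := fun w => if x j ≤ w then σ w else 0) (by simp) hw)
  · simp_all

lemma exists_mem_support_le_of_fineDeg_ne_zero {σ : P →₀ ℕ} {j : Fin n}
    (h : fineDeg x σ j ≠ 0) : ∃ w ∈ σ.support, x j ≤ w := by
  rw [fineDeg_apply] at h
  obtain ⟨w, hw, hne⟩ := Finset.exists_ne_zero_of_sum_ne_zero h
  exact ⟨w, hw, by_contra fun hc => hne (if_neg hc)⟩

lemma fineDeg_single_add_single_eq (v w m z : P)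
    (hm : vertexSet x m = vertexSet x v ∩ vertexSet x w)
    (hz : vertexSet x z = vertexSet x v ∪ vertexSet x w) :
    fineDeg x (Finsupp.single m 1 + Finsupp.single z 1) =
      fineDeg x (Finsupp.single v 1 + Finsupp.single w 1) := by
  simp only [map_add, fineDeg_single, one_smul, hm, hz]
  rw [add_comm, Finset.sum_union_inter]

variable [OrderBot P]

lemma fineDeg_single_atom (hx : IsAtomLabelling x) (i : Fin n) (m : ℕ) :
    fineDeg x (Finsupp.single (x i) m) = Finsupp.single i m := by
  rw [fineDeg_single, vertexSet_atom hx, Finset.sum_singleton, Finsupp.smul_single_one]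

lemma fineDeg_erase_bot (hx : IsAtomLabelling x) (σ : P →₀ ℕ) :
    fineDeg x (σ.erase ⊥) = fineDeg x σ := by
  conv_rhs => rw [← Finsupp.erase_add_single ⊥ σ]
  rw [map_add, fineDeg_single, vertexSet_bot hx, Finset.sum_empty, smul_zero, add_zero]

end FineDegree

section FaceRingBasics

variable {P : Type} [Fintype P] [PartialOrder P] [OrderBot P] {k : Type} [Field k]
  {n : ℕ} {x : Fin n → P}

variable (k) in
def faceMonomial (σ : P →₀ ℕ) : FaceRing P k := Ideal.Quotient.mk _ (monomial σ 1)

lemma faceMonomial_add (σ τ : P →₀ ℕ) :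
    faceMonomial k (σ + τ) = faceMonomial k σ * faceMonomial k τ := by
  rw [faceMonomial, faceMonomial, faceMonomial, ← map_mul, monomial_mul, one_mul]

lemma faceMonomial_single (w : P) (m : ℕ) :
    faceMonomial k (Finsupp.single w m) = fv P k w ^ m := by
  rw [faceMonomial, fv, ← map_pow, X_pow_eq_monomial]

lemma faceMonomial_single_one (w : P) : faceMonomial k (Finsupp.single w 1) = fv P k w := by
  rw [faceMonomial_single, pow_one]

lemma fv_bot : fv P k ⊥ = 1 := by
  rw [fv, ← map_one (Ideal.Quotient.mk _), Ideal.Quotient.eq]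
  exact Ideal.subset_span (Or.inr rfl)

lemma faceMonomial_erase_bot (σ : P →₀ ℕ) :
    faceMonomial k (σ.erase ⊥) = faceMonomial k σ := by
  conv_rhs => rw [← Finsupp.erase_add_single ⊥ σ]
  rw [faceMonomial_add, faceMonomial_single, fv_bot, one_pow, mul_one]

lemma fv_mul_fv_eq_zero {w y : P} (h : upperBounds {w, y} = ∅) : fv P k w * fv P k y = 0 := by
  rw [fv, fv, ← map_mul, Ideal.Quotient.eq_zero_iff_mem]
  exact Ideal.subset_span (Or.inl (Or.inl ⟨w, y, h, rfl⟩))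

lemma fv_mul_fv_eq {w y m : P} (hub : (upperBounds {w, y}).Nonempty) (hm : IsGLB {w, y} m) :
    fv P k w * fv P k y = fv P k m * ∑ z ∈ (Set.toFinite (MUB w y)).toFinset, fv P k z := by
  simp only [fv, ← map_mul, ← map_sum]
  exact Ideal.Quotient.eq.2 (Ideal.subset_span (Or.inl (Or.inr ⟨w, y, m, hub, hm, rfl⟩)))

lemma facePiece_eq_span (β : Fin n → ℤ) :
    facePiece P k n x β =
      Submodule.span k (faceMonomial k '' {σ | ∀ j, (fineDeg x σ j : ℤ) = β j}) := by
  simp only [facePiece, fineDeg_apply, Nat.cast_sum, Nat.cast_ite, Nat.cast_zero]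
  congr 1
  ext r
  simp [faceMonomial, eq_comm]

end FaceRingBasics

section StandardMonomials

variable {P : Type} [PartialOrder P] {n : ℕ} {x : Fin n → P}

lemma exists_forall_le_of_isChain {s : Finset P} (hs : IsChain (· ≤ ·) (s : Set P))
    (hne : s.Nonempty) : ∃ w ∈ s, ∀ v ∈ s, v ≤ w := by
  obtain ⟨w, hw⟩ := s.exists_maximal hne
  exact ⟨w, hw.1, fun v hv => (hs.total hv hw.1).elim id fun h => hw.2 hv h⟩

lemma fineDeg_ne_zero_iff_of_top {σ : P →₀ ℕ} {w : P} (hw : w ∈ σ.support)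
    (htop : ∀ v ∈ σ.support, v ≤ w) {j : Fin n} : fineDeg x σ j ≠ 0 ↔ x j ≤ w := by
  refine ⟨fun h => ?_, fun h => ?_⟩
  · obtain ⟨v, hv, hjv⟩ := exists_mem_support_le_of_fineDeg_ne_zero h
    exact hjv.trans (htop v hv)
  · exact (Nat.pos_of_ne_zero (Finsupp.mem_support_iff.1 hw)).trans_le (le_fineDeg_apply σ h)
      |>.ne'

variable [OrderBot P]

def IsStandard (σ : P →₀ ℕ) : Prop :=
  ⊥ ∉ σ.support ∧ IsChain (· ≤ ·) (σ.support : Set P)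

lemma IsStandard.erase {σ : P →₀ ℕ} (hσ : IsStandard σ) (w : P) :
    IsStandard (σ.erase w) := by
  rw [IsStandard, Finsupp.support_erase, Finset.coe_erase]
  exact ⟨fun h => hσ.1 (Finset.mem_of_mem_erase h), hσ.2.mono Set.sdiff_subset⟩

lemma IsStandard.exists_top {σ : P →₀ ℕ} (hσ : IsStandard σ) (hne : σ ≠ 0) :
    ∃ w ∈ σ.support, ∀ v ∈ σ.support, v ≤ w :=
  exists_forall_le_of_isChain hσ.2 (Finsupp.support_nonempty_iff.2 hne)

lemma IsStandard.exists_eq_single_add_single_add {σ : P →₀ ℕ} (hσ : IsStandard σ)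
    {j : Fin n} (hj : 2 ≤ fineDeg x σ j) : ∃ a b ρ, x j ≤ a ∧ a ≤ b ∧
      σ = Finsupp.single a 1 + Finsupp.single b 1 + ρ := by
  obtain ⟨a, ha⟩ := (σ.support.filter (x j ≤ ·)).exists_minimal <| by
    obtain ⟨w, hw, hjw⟩ := exists_mem_support_le_of_fineDeg_ne_zero (x := x) (σ := σ) (j := j)
      (by omega)
    exact ⟨w, Finset.mem_filter.2 ⟨hw, hjw⟩⟩
  obtain ⟨haσ, hja⟩ := Finset.mem_filter.1 ha.1
  have hσa : σ = Finsupp.single a 1 + (σ - Finsupp.single a 1) := (add_tsub_cancel_of_le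
    (Finsupp.single_le_iff.2 (Nat.one_le_iff_ne_zero.2 (Finsupp.mem_support_iff.1 haσ)))).symm
  obtain ⟨b, hb, hjb⟩ := exists_mem_support_le_of_fineDeg_ne_zero (x := x)
    (σ := σ - Finsupp.single a 1) (j := j) <| by
    have := congrArg (fun σ => fineDeg x σ j) hσa
    simp only [map_add, Finsupp.add_apply, fineDeg_single_one_apply, if_pos hja] at this
    omega
  obtain ⟨ρ, hρ⟩ := Finsupp.exists_eq_single_add_single_add haσ hb
  refine ⟨a, b, ρ, hja, ?_, hρ⟩
  have hbσ : b ∈ σ.support := Finsupp.support_tsub hb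
  exact (hσ.2.total haσ hbσ).elim id (ha.2 (Finset.mem_filter.2 ⟨hbσ, hjb⟩))

variable [Fintype P]

lemma IsStandard.eq_zero_of_fineDeg_eq_zero (hP : IsSimplicialPoset P) (hx : IsAtomLabelling x)
    {σ : P →₀ ℕ} (hσ : IsStandard σ) (h : fineDeg x σ = 0) : σ = 0 := by
  by_contra hne
  obtain ⟨w, hw⟩ := Finsupp.support_nonempty_iff.2 hne
  obtain ⟨j, hj⟩ := vertexSet_nonempty hP hx fun h => hσ.1 (h ▸ hw)
  have := le_fineDeg_apply (x := x) σ (mem_vertexSet.1 hj)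
  rw [h, Finsupp.zero_apply, Nat.le_zero] at this
  exact Finsupp.mem_support_iff.1 hw this

lemma IsStandard.exists_vertex_of_top (hP : IsSimplicialPoset P) (hx : IsAtomLabelling x)
    {σ : P →₀ ℕ} (hσ : IsStandard σ) {w : P} (hw : w ∈ σ.support)
    (htop : ∀ v ∈ σ.support, v ≤ w) : ∃ j, x j ≤ w ∧ fineDeg x σ j = σ w := by
  suffices ∃ j, x j ≤ w ∧ ∀ v ∈ σ.support, v ≠ w → ¬ x j ≤ v by
    obtain ⟨j, hjw, hj⟩ := this
    refine ⟨j, hjw, ?_⟩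
    rw [fineDeg_apply, Finset.sum_eq_single_of_mem w hw fun v hv hne => if_neg (hj v hv hne),
      if_pos hjw]
  rcases (σ.support.erase w).eq_empty_or_nonempty with hs | hs
  · obtain ⟨j, hj⟩ := vertexSet_nonempty hP hx fun h => hσ.1 (h ▸ hw)
    exact ⟨j, mem_vertexSet.1 hj, fun v hv hne =>
      absurd (Finset.mem_erase.2 ⟨hne, hv⟩) (hs ▸ Finset.notMem_empty v)⟩
  obtain ⟨w₂, hw₂, htop₂⟩ :=
    exists_forall_le_of_isChain (hσ.2.mono (by simp)) hs
  have hw₂w : w₂ ≤ w := htop w₂ (Finset.mem_of_mem_erase hw₂)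
  obtain ⟨j, hjw, hjw₂⟩ := Finset.exists_of_ssubset (Finset.ssubset_iff_subset_ne.2
    ⟨vertexSet_mono hw₂w, fun h =>
      Finset.ne_of_mem_erase hw₂ (eq_of_vertexSet_eq hP hx hw₂w le_rfl h)⟩)
  exact ⟨j, mem_vertexSet.1 hjw, fun v hv hne hjv => hjw₂ (mem_vertexSet.2
    (hjv.trans (htop₂ v (Finset.mem_erase.2 ⟨hne, hv⟩))))⟩

lemma IsStandard.apply_top_eq_of_fineDeg_eq (hP : IsSimplicialPoset P)
    (hx : IsAtomLabelling x) {σ τ : P →₀ ℕ} (hσ : IsStandard σ) (hτ : IsStandard τ)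
    {w : P} (hwσ : w ∈ σ.support) (htopσ : ∀ v ∈ σ.support, v ≤ w)
    (hwτ : w ∈ τ.support) (htopτ : ∀ v ∈ τ.support, v ≤ w)
    (h : fineDeg x σ = fineDeg x τ) : σ w = τ w := by
  obtain ⟨j, hjw, hj⟩ := hσ.exists_vertex_of_top hP hx hwσ htopσ
  obtain ⟨j', hj'w, hj'⟩ := hτ.exists_vertex_of_top hP hx hwτ htopτ
  refine le_antisymm ?_ ?_
  · exact hj' ▸ h ▸ le_fineDeg_apply σ hj'w
  · exact hj ▸ h.symm ▸ le_fineDeg_apply τ hjw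

lemma IsStandard.eq_of_fineDeg_eq (hP : IsSimplicialPoset P) (hx : IsAtomLabelling x) {Y : P}
    {σ τ : P →₀ ℕ} (hσ : IsStandard σ) (hτ : IsStandard τ)
    (hσY : ∀ v ∈ σ.support, v ≤ Y) (hτY : ∀ v ∈ τ.support, v ≤ Y)
    (h : fineDeg x σ = fineDeg x τ) : σ = τ := by
  induction hc : σ.support.card generalizing σ τ with
  | zero =>
    obtain rfl := Finsupp.support_eq_empty.1 (Finset.card_eq_zero.1 hc)
    exact (hτ.eq_zero_of_fineDeg_eq_zero hP hx (h ▸ map_zero _)).symm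
  | succ c ih =>
    have hσ0 : σ ≠ 0 := by rintro rfl; simp at hc
    have hτ0 : τ ≠ 0 := fun h0 => hσ0 (hσ.eq_zero_of_fineDeg_eq_zero hP hx (by simp [h, h0]))
    obtain ⟨w, hw, htop⟩ := hσ.exists_top hσ0
    obtain ⟨w', hw', htop'⟩ := hτ.exists_top hτ0
    obtain rfl : w = w' := eq_of_vertexSet_eq hP hx (hσY w hw) (hτY w' hw') <| by
      ext j
      rw [mem_vertexSet, mem_vertexSet, ← fineDeg_ne_zero_iff_of_top hw htop,
        ← fineDeg_ne_zero_iff_of_top hw' htop', h]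
    have hmult := hσ.apply_top_eq_of_fineDeg_eq hP hx hτ hw htop hw' htop' h
    have herase : ∀ ρ : P →₀ ℕ,
        fineDeg x ρ = fineDeg x (ρ.erase w) + fineDeg x (Finsupp.single w (ρ w)) := fun ρ => by
      rw [← map_add, Finsupp.erase_add_single]
    have heq := ih (hσ.erase w) (hτ.erase w)
      (fun v hv => hσY v (Finset.mem_of_mem_erase (by rwa [Finsupp.support_erase] at hv)))
      (fun v hv => hτY v (Finset.mem_of_mem_erase (by rwa [Finsupp.support_erase] at hv)))
      (add_right_cancel (b := fineDeg x (Finsupp.single w (σ w)))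
        (by rw [← herase, hmult, ← herase, h]))
      (by rw [Finsupp.support_erase, Finset.card_erase_of_mem hw, hc, Nat.add_sub_cancel])
    rw [← Finsupp.erase_add_single w σ, ← Finsupp.erase_add_single w τ, heq, hmult]

end StandardMonomials

section Restriction

variable {P : Type} [PartialOrder P] {k : Type} [CommSemiring k] {n : ℕ} {x : Fin n → P}

variable (k x) in
def restrictPoly (y : P) : MvPolynomial P k →ₐ[k] MvPolynomial (Fin n) k :=
  aeval fun w => if w ≤ y then monomial (∑ i ∈ vertexSet x w, Finsupp.single i 1) 1 else 0

lemma restrictPoly_X (y w : P) :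
    restrictPoly k x y (X w) =
      if w ≤ y then monomial (∑ i ∈ vertexSet x w, Finsupp.single i 1) 1 else 0 :=
  aeval_X _ _

lemma restrictPoly_monomial (y : P) (σ : P →₀ ℕ) (c : k) :
    restrictPoly k x y (monomial σ c) =
      if ∀ w ∈ σ.support, w ≤ y then monomial (fineDeg x σ) c else 0 := by
  rw [restrictPoly, aeval_monomial, Finsupp.prod]
  split_ifs with h
  · rw [fineDeg, Finsupp.linearCombination_apply, monomial_finsupp_sum_index, Finsupp.prod,
      algebraMap_eq]
    congr 1
    refine Finset.prod_congr rfl fun w hw => ?_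
    rw [if_pos (h w hw), monomial_pow, one_pow]
  · push Not at h
    obtain ⟨w, hw, hwy⟩ := h
    rw [Finset.prod_eq_zero hw (by rw [if_neg hwy, zero_pow (Finsupp.mem_support_iff.1 hw)]),
      mul_zero]

lemma coeff_restrictPoly (y : P) (p : MvPolynomial P k) (d : Fin n →₀ ℕ) :
    coeff d (restrictPoly k x y p) =
      ∑ σ ∈ p.support,
        if (∀ w ∈ σ.support, w ≤ y) ∧ fineDeg x σ = d then coeff σ p else 0 := by
  conv_lhs => rw [p.as_sum, map_sum, coeff_sum]
  refine Finset.sum_congr rfl fun σ _ => ?_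
  rw [restrictPoly_monomial]
  split_ifs with h₁ h₂ h₂ <;> simp_all [coeff_monomial]

lemma restrictPoly_eq_zero_of_mem_restrictSupport {β : Fin n → ℤ} {j : Fin n} (hβ : 0 < β j)
    {y : P} (hy : ¬ x j ≤ y) {p : MvPolynomial P k}
    (hp : p ∈ restrictSupport k {σ | ∀ j, (fineDeg x σ j : ℤ) = β j}) :
    restrictPoly k x y p = 0 := by
  rw [mem_restrictSupport_iff] at hp
  ext d
  rw [coeff_restrictPoly, coeff_zero]
  refine Finset.sum_eq_zero fun σ hσ => if_neg fun h => ?_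
  obtain ⟨w, hw, hjw⟩ := exists_mem_support_le_of_fineDeg_ne_zero (x := x) (σ := σ) (j := j)
    (by have := hp hσ j; omega)
  exact hy (hjw.trans (h.1 w hw))

lemma restrictPoly_X_mul_X_of_not_le {y w w' : P} (h : ¬ (w ≤ y ∧ w' ≤ y)) :
    restrictPoly k x y (X w * X w') = 0 := by
  rw [map_mul, restrictPoly_X, restrictPoly_X]
  rcases not_and_or.1 h with h | h <;> simp [h]

end Restriction

section FaceIdeal

variable {P : Type} [Fintype P] [PartialOrder P] [OrderBot P] {k : Type} [Field k]
  {n : ℕ} {x : Fin n → P}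

lemma restrictPoly_eq_zero_of_mem_faceIdeal (hP : IsSimplicialPoset P) (hx : IsAtomLabelling x)
    (y : P) :
    ∀ p ∈ faceIdeal P k, restrictPoly k x y p = 0 := by
  change faceIdeal P k ≤ RingHom.ker (restrictPoly k x y)
  refine Ideal.span_le.2 ?_
  rintro f ((⟨w, w', hub, rfl⟩ | ⟨w, w', m, hub, hm, rfl⟩) | rfl) <;>
    simp only [SetLike.mem_coe, RingHom.mem_ker]
  · refine restrictPoly_X_mul_X_of_not_le fun hw => ?_
    exact (Set.eq_empty_iff_forall_notMem.1 hub) y (mem_upperBounds_pair.2 hw)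
  · rw [map_sub, sub_eq_zero]
    by_cases hwy : w ≤ y ∧ w' ≤ y
    · obtain ⟨m', hm', hm'V⟩ := exists_isGLB_vertexSet_eq_inter hP hx hwy.1 hwy.2
      obtain ⟨z, hz, hzy⟩ := exists_mem_MUB_le hP hx hwy.1 hwy.2
      simp only [map_mul, map_sum]
      rw [Finset.sum_eq_single_of_mem z ((Set.Finite.mem_toFinset _).2 hz)
        fun z' hz' hne => by
          rw [restrictPoly_X, if_neg fun hz'y => hne (eq_of_mem_MUB_of_le hP hx
            ((Set.Finite.mem_toFinset _).1 hz') hz hz'y hzy)]]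
      obtain rfl := hm.unique hm'
      have hmy : m ≤ y := (hm.1 (Set.mem_insert w _)).trans hwy.1
      simp only [restrictPoly_X, if_pos hwy.1, if_pos hwy.2, if_pos hmy, if_pos hzy, monomial_mul,
        hm'V, vertexSet_eq_union_of_mem_MUB hP hx hz]
      rw [add_comm (∑ i ∈ vertexSet x w ∩ vertexSet x w', _), Finset.sum_union_inter]
    · rw [restrictPoly_X_mul_X_of_not_le hwy, map_mul, map_sum, Finset.sum_eq_zero fun z hz => ?_,
        mul_zero]
      obtain ⟨hwz, hw'z⟩ := mem_upperBounds_pair.1 ((Set.Finite.mem_toFinset _).1 hz).1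
      rw [restrictPoly_X, if_neg fun hzy => hwy ⟨hwz.trans hzy, hw'z.trans hzy⟩]
  · simp [restrictPoly_X, vertexSet_bot hx]

end FaceIdeal

section Straightening

variable {P : Type} [Fintype P] [PartialOrder P] [OrderBot P] {k : Type} [Field k]
  {n : ℕ} {x : Fin n → P}

lemma mul_tsub_add_mul_tsub_lt {a b c d N : ℕ} (hsum : a + d = b + c) (hb : a < b) (hc : a < c)
    (hd : d ≤ N) : a * (N - a) + d * (N - d) < b * (N - b) + c * (N - c) := by
  have hbN : b ≤ N := by omega
  have hcN : c ≤ N := by omega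
  zify [hbN, hcN, hd, hb.le.trans hbN] at *
  nlinarith [mul_pos (sub_pos.2 hb) (sub_pos.2 hc)]

variable (x) in
/-- Termination measure for straightening: `s ↦ s (n - s)` is concave, so replacing two
incomparable faces `v, w` by `v ∧ w` and `v ∨ w` strictly lowers it. -/
def straightenWeight : (P →₀ ℕ) →ₗ[ℕ] ℕ :=
  Finsupp.linearCombination ℕ fun w => (vertexSet x w).card * (n - (vertexSet x w).card)

lemma straightenWeight_lt (hP : IsSimplicialPoset P) (hx : IsAtomLabelling x) {u v w m z : P}
    (hv : v ≤ u) (hw : w ≤ u) (hvw : ¬ v ≤ w) (hwv : ¬ w ≤ v)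
    (hm : vertexSet x m = vertexSet x v ∩ vertexSet x w)
    (hz : vertexSet x z = vertexSet x v ∪ vertexSet x w) (ρ : P →₀ ℕ) :
    straightenWeight x (Finsupp.single m 1 + Finsupp.single z 1 + ρ) <
      straightenWeight x (Finsupp.single v 1 + Finsupp.single w 1 + ρ) := by
  have hlt : ∀ {v w}, v ≤ u → w ≤ u → ¬ v ≤ w →
      (vertexSet x v ∩ vertexSet x w).card < (vertexSet x v).card := fun hv hw hvw =>
    Finset.card_lt_card (Finset.ssubset_iff_subset_ne.2 ⟨Finset.inter_subset_left, fun h =>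
      hvw ((vertexSet_subset_vertexSet_iff hP hx hv hw).1 (Finset.inter_eq_left.1 h))⟩)
  simp only [straightenWeight, map_add, Finsupp.linearCombination_single, smul_eq_mul, one_mul,
    add_lt_add_iff_right]
  rw [hm, hz]
  refine mul_tsub_add_mul_tsub_lt (Finset.card_inter_add_card_union _ _) (hlt hv hw hvw) ?_
    ((Finset.card_le_univ _).trans_eq (Fintype.card_fin n))
  exact Finset.inter_comm (vertexSet x v) _ ▸ hlt hw hv hwv

lemma faceMonomial_mem_span_isStandard (hP : IsSimplicialPoset P) (hx : IsAtomLabelling x)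
    (σ : P →₀ ℕ) :
    faceMonomial k σ ∈ Submodule.span k
      (faceMonomial k '' {τ | IsStandard τ ∧ fineDeg x τ = fineDeg x σ}) := by
  induction hN : straightenWeight x σ using Nat.strong_induction_on generalizing σ with
  | _ N ih =>
  by_cases hchain : IsChain (· ≤ ·) (σ.support : Set P)
  · refine Submodule.subset_span ⟨σ.erase ⊥, ⟨?_, fineDeg_erase_bot hx σ⟩,
      faceMonomial_erase_bot σ⟩
    rw [IsStandard, Finsupp.support_erase, Finset.coe_erase]
    exact ⟨Finset.notMem_erase _ _, hchain.mono Set.sdiff_subset⟩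
  obtain ⟨v, hv, w, hw, hne, hvw, hwv⟩ : ∃ v ∈ σ.support, ∃ w ∈ σ.support, v ≠ w ∧
      ¬ v ≤ w ∧ ¬ w ≤ v := by
    simpa [IsChain, Set.Pairwise, not_or] using hchain
  obtain ⟨ρ, rfl⟩ := Finsupp.exists_eq_single_add_single_add hv (b := w)
    (by simpa [Finsupp.single_apply, hne] using hw)
  have hσ : faceMonomial k (Finsupp.single v 1 + Finsupp.single w 1 + ρ) =
      fv P k v * fv P k w * faceMonomial k ρ := by
    rw [faceMonomial_add, faceMonomial_add, faceMonomial_single_one, faceMonomial_single_one]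
  rcases Set.eq_empty_or_nonempty (upperBounds {v, w}) with hub | hub
  · rw [hσ, fv_mul_fv_eq_zero hub, zero_mul]
    exact Submodule.zero_mem _
  obtain ⟨u, hu⟩ := hub
  obtain ⟨hvu, hwu⟩ := mem_upperBounds_pair.1 hu
  obtain ⟨m, hm, hmV⟩ := exists_isGLB_vertexSet_eq_inter hP hx hvu hwu
  rw [hσ, fv_mul_fv_eq ⟨u, hu⟩ hm, Finset.mul_sum, Finset.sum_mul]
  refine Submodule.sum_mem _ fun z hz => ?_
  have hzV := vertexSet_eq_union_of_mem_MUB hP hx ((Set.Finite.mem_toFinset _).1 hz)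
  have hdeg : fineDeg x (Finsupp.single m 1 + Finsupp.single z 1 + ρ) =
      fineDeg x (Finsupp.single v 1 + Finsupp.single w 1 + ρ) := by
    rw [map_add, map_add _ (_ + _), fineDeg_single_add_single_eq v w m z hmV hzV]
  rw [← hdeg, mul_assoc, ← faceMonomial_single_one, ← faceMonomial_single_one,
    ← faceMonomial_add, ← faceMonomial_add, ← add_assoc]
  exact ih _ (hN ▸ straightenWeight_lt hP hx hvu hwu hvw hwv hmV hzV ρ) _ rfl

end Straightening

section Faithfulness

variable {P : Type} [Fintype P] [PartialOrder P] [OrderBot P] {k : Type} [Field k]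
  {n : ℕ} {x : Fin n → P}

lemma eq_zero_of_forall_restrictPoly_eq_zero (hP : IsSimplicialPoset P) (hx : IsAtomLabelling x)
    {p : MvPolynomial P k} (hp : p ∈ restrictSupport k {σ | IsStandard σ})
    (h : ∀ y, restrictPoly k x y p = 0) : p = 0 := by
  rw [mem_restrictSupport_iff] at hp
  by_contra hne
  obtain ⟨σ, hσ⟩ := support_nonempty.2 hne
  obtain ⟨Y, hY⟩ : ∃ Y, ∀ v ∈ σ.support, v ≤ Y := by
    rcases eq_or_ne σ 0 with rfl | hσ0
    · exact ⟨⊥, by simp⟩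
    · obtain ⟨w, -, hw⟩ := (hp hσ).exists_top hσ0
      exact ⟨w, hw⟩
  have hcoeff := congrArg (coeff (fineDeg x σ)) (h Y)
  rw [coeff_restrictPoly, coeff_zero, Finset.sum_eq_single_of_mem σ hσ, if_pos ⟨hY, rfl⟩]
    at hcoeff
  · exact mem_support_iff.1 hσ hcoeff
  · exact fun τ hτ hne =>
      if_neg fun hτσ => hne ((hp hτ).eq_of_fineDeg_eq hP hx (hp hσ) hτσ.1 hY hτσ.2)

lemma mk_mem_of_forall_faceMonomial_mem {M : Submodule k (FaceRing P k)}
    (h : ∀ σ, faceMonomial k σ ∈ M) (p : MvPolynomial P k) : Ideal.Quotient.mk _ p ∈ M := by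
  induction p using MvPolynomial.induction_on' with
  | monomial σ c =>
    rw [← mul_one c, ← smul_eq_mul, ← smul_monomial, ← Ideal.Quotient.mkₐ_eq_mk k,
      map_smul]
    exact M.smul_mem c (h σ)
  | add p q hp hq => rw [map_add]; exact M.add_mem hp hq

lemma span_faceMonomial_eq_map (s : Set (P →₀ ℕ)) :
    Submodule.span k (faceMonomial k '' s) =
      (restrictSupport k s).map (Ideal.Quotient.mkₐ k (faceIdeal P k)).toLinearMap := by
  rw [restrictSupport_eq_span, Submodule.map_span, ← Set.image_comp]
  rfl

theorem mem_faceIdeal_iff (hP : IsSimplicialPoset P) (hx : IsAtomLabelling x)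
    {p : MvPolynomial P k} : p ∈ faceIdeal P k ↔ ∀ y, restrictPoly k x y p = 0 := by
  refine ⟨fun hp y => restrictPoly_eq_zero_of_mem_faceIdeal hP hx y p hp, fun h => ?_⟩
  have hmem : Ideal.Quotient.mk _ p ∈ (restrictSupport k {σ | IsStandard σ}).map
      (Ideal.Quotient.mkₐ k (faceIdeal P k)).toLinearMap := by
    rw [← span_faceMonomial_eq_map]
    exact mk_mem_of_forall_faceMonomial_mem (fun σ => Submodule.span_mono
      (Set.image_mono fun τ hτ => hτ.1) (faceMonomial_mem_span_isStandard hP hx σ)) p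
  obtain ⟨s, hs, hsp⟩ := hmem
  have hps : p - s ∈ faceIdeal P k := Ideal.Quotient.eq.1 hsp.symm
  have hs0 := eq_zero_of_forall_restrictPoly_eq_zero hP hx hs fun y => by
    simpa [h y] using restrictPoly_eq_zero_of_mem_faceIdeal hP hx y _ hps
  simpa [hs0] using hps

end Faithfulness

section Pieces

variable {P : Type} [Fintype P] [PartialOrder P] [OrderBot P] {k : Type} [Field k]
  {n : ℕ} {x : Fin n → P}

lemma facePiece_eq_map (β : Fin n → ℤ) :
    facePiece P k n x β = (restrictSupport k {σ | ∀ j, (fineDeg x σ j : ℤ) = β j}).map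
      (Ideal.Quotient.mkₐ k (faceIdeal P k)).toLinearMap := by
  rw [facePiece_eq_span, span_faceMonomial_eq_map]

lemma map_fv_pow_mul_facePiece_le (hx : IsAtomLabelling x) (β : Fin n → ℤ) (i : Fin n)
    (m : ℕ) :
    (facePiece P k n x β).map (LinearMap.mulLeft k (fv P k (x i) ^ m)) ≤
      facePiece P k n x (β + Pi.single i (m : ℤ)) := by
  rw [facePiece_eq_span, facePiece_eq_span, Submodule.map_span_le]
  rintro _ ⟨σ, hσ, rfl⟩
  refine Submodule.subset_span ⟨Finsupp.single (x i) m + σ, fun j => ?_, ?_⟩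
  · rw [map_add, fineDeg_single_atom hx, Finsupp.add_apply, Nat.cast_add, hσ, Pi.add_apply,
      add_comm]
    by_cases hj : j = i <;> simp [hj]
  · rw [faceMonomial_add, faceMonomial_single, LinearMap.mulLeft_apply]

lemma eq_zero_of_fv_pow_mul_eq_zero (hP : IsSimplicialPoset P) (hx : IsAtomLabelling x)
    {β : Fin n → ℤ} {j : Fin n} (hβ : 0 < β j) {m : ℕ} {a : FaceRing P k}
    (ha : a ∈ facePiece P k n x β) (h : fv P k (x j) ^ m * a = 0) : a = 0 := by
  rw [facePiece_eq_map] at ha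
  obtain ⟨p, hp, rfl⟩ := ha
  have hXp : X (x j) ^ m * p ∈ faceIdeal P k := by
    rwa [← Ideal.Quotient.eq_zero_iff_mem, map_mul, map_pow]
  refine Ideal.Quotient.eq_zero_iff_mem.2 ((mem_faceIdeal_iff hP hx).2 fun y => ?_)
  by_cases hy : x j ≤ y
  · have := (mem_faceIdeal_iff hP hx).1 hXp y
    rw [map_mul, map_pow, restrictPoly_X, if_pos hy, vertexSet_atom hx, Finset.sum_singleton,
      ← X, mul_eq_zero] at this
    exact this.resolve_left (pow_ne_zero m (X_ne_zero j))
  · exact restrictPoly_eq_zero_of_mem_restrictSupport hβ hy hp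

/-- `y_{x_j} y_{a'} = y_a + Σ y_z` over the other minimal upper bounds `z` of `x_j` and `a'`,
and each such `y_z` kills `y_b`. -/
lemma fv_mul_fv_eq_of_le (hP : IsSimplicialPoset P) (hx : IsAtomLabelling x) {j : Fin n}
    {a a' b : P} (hja : x j ≤ a) (hab : a ≤ b) (ha' : a' ≤ a)
    (hV : vertexSet x a' = (vertexSet x a).erase j) :
    fv P k a * fv P k b = fv P k (x j) * fv P k a' * fv P k b := by
  have hja' : ¬ x j ≤ a' := fun h => by simpa [hV] using mem_vertexSet.2 h
  have hglb : IsGLB {x j, a'} ⊥ := ⟨fun _ _ => bot_le, fun l hl =>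
    ((hx.isAtom j).le_iff.1 (hl (Set.mem_insert _ _))).elim le_of_eq
      fun h => absurd (h ▸ hl (by simp)) hja'⟩
  have hub : a ∈ upperBounds {x j, a'} := mem_upperBounds_pair.2 ⟨hja, ha'⟩
  have haMUB : a ∈ MUB (x j) a' := mem_MUB_of_vertexSet_eq_union hP hx hub <| by
    rw [vertexSet_atom hx, hV, ← Finset.insert_eq, Finset.insert_erase (mem_vertexSet.2 hja)]
  rw [fv_mul_fv_eq ⟨a, hub⟩ hglb, fv_bot, one_mul, Finset.sum_mul,
    Finset.sum_eq_single_of_mem a ((Set.Finite.mem_toFinset _).2 haMUB)]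
  intro z hz hza
  refine fv_mul_fv_eq_zero (Set.eq_empty_iff_forall_notMem.2 fun u hu => hza ?_)
  obtain ⟨hzu, hbu⟩ := mem_upperBounds_pair.1 hu
  exact eq_of_mem_MUB_of_le hP hx ((Set.Finite.mem_toFinset _).1 hz) haMUB hzu (hab.trans hbu)

lemma IsStandard.exists_faceMonomial_eq_fv_mul (hP : IsSimplicialPoset P)
    (hx : IsAtomLabelling x) {σ : P →₀ ℕ} (hσ : IsStandard σ) {j : Fin n}
    (hj : 2 ≤ fineDeg x σ j) : ∃ τ, fineDeg x τ + Finsupp.single j 1 = fineDeg x σ ∧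
      faceMonomial k σ = fv P k (x j) * faceMonomial k τ := by
  obtain ⟨a, b, ρ, hja, hab, rfl⟩ := hσ.exists_eq_single_add_single_add hj
  obtain ⟨a', ha', hV⟩ := exists_le_vertexSet_eq hP hx ((vertexSet x a).erase_subset j)
  refine ⟨Finsupp.single a' 1 + Finsupp.single b 1 + ρ, ?_, ?_⟩
  · have hVa : vertexSet x a = insert j (vertexSet x a') := by
      rw [hV, Finset.insert_erase (mem_vertexSet.2 hja)]
    simp only [map_add, fineDeg_single, one_smul, hVa,
      Finset.sum_insert (hV ▸ Finset.notMem_erase j _ : j ∉ vertexSet x a')]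
    abel
  · simp only [faceMonomial_add, faceMonomial_single_one,
      fv_mul_fv_eq_of_le hP hx hja hab ha' hV]
    ring

lemma facePiece_le_map_fv_mul (hP : IsSimplicialPoset P) (hx : IsAtomLabelling x)
    {β : Fin n → ℤ} {j : Fin n} (hβ : 0 < β j) :
    facePiece P k n x (β + Pi.single j 1) ≤
      (facePiece P k n x β).map (LinearMap.mulLeft k (fv P k (x j))) := by
  rw [facePiece_eq_span (β + _), Submodule.span_le]
  rintro _ ⟨σ, hσ, rfl⟩
  refine Submodule.span_le.2 ?_ (faceMonomial_mem_span_isStandard hP hx σ)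
  rintro _ ⟨τ, ⟨hτ, hτσ⟩, rfl⟩
  obtain ⟨τ', hτ', hfm⟩ := hτ.exists_faceMonomial_eq_fv_mul (k := k) hP hx (j := j) <| by
    have := hσ j
    rw [hτσ]
    simp only [Pi.add_apply, Pi.single_eq_same] at this
    omega
  refine ⟨faceMonomial k τ', ?_, hfm.symm⟩
  rw [facePiece_eq_span]
  refine Submodule.subset_span ⟨τ', fun l => ?_, rfl⟩
  have := hσ l
  rw [← hτσ, ← hτ', Finsupp.add_apply, Nat.cast_add, Pi.add_apply] at this
  by_cases hl : l = j
  · subst hl; simp_all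
  · simp_all

lemma facePiece_le_map_fv_pow_mul (hP : IsSimplicialPoset P) (hx : IsAtomLabelling x)
    {β : Fin n → ℤ} {j : Fin n} (hβ : 0 < β j) (m : ℕ) :
    facePiece P k n x (β + Pi.single j (m : ℤ)) ≤
      (facePiece P k n x β).map (LinearMap.mulLeft k (fv P k (x j) ^ m)) := by
  induction m with
  | zero => simp [LinearMap.mulLeft_one]
  | succ m ih =>
    have hshift :
        β + Pi.single j ((m + 1 : ℕ) : ℤ) = β + Pi.single j (m : ℤ) + Pi.single j 1 := by
      rw [add_assoc, ← Pi.single_add]; push_cast; rfl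
    rw [hshift, pow_succ', LinearMap.mulLeft_mul, Submodule.map_comp]
    have hβm : 0 < (β + Pi.single j (m : ℤ) : Fin n → ℤ) j := by
      rw [Pi.add_apply, Pi.single_eq_same]; omega
    exact (facePiece_le_map_fv_mul hP hx hβm).trans (Submodule.map_mono ih)

end Pieces

section Koszul

variable (k : Type*) {R ι : Type*} [CommRing k] [CommRing R] [Algebra k R] [LinearOrder ι]

def koszulDiff (c : ι → R) : (Finset ι → R) →ₗ[k] (Finset ι → R) :=
  LinearMap.pi fun G =>
    ∑ j ∈ G, ((-1 : k) ^ ((G.filter fun i => i < j).card)) •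
      ((LinearMap.mulLeft k (c j)).comp (LinearMap.proj (G.erase j)))

def gradedCochains (D : Finset ι → Submodule k R) (t : ℕ) : Submodule k (Finset ι → R) :=
  Submodule.pi Set.univ fun G => if G.card = t then D G else ⊥

/-- Contracting homotopy, applied to `u` with `c j * u H = f (insert j H)` for a cocycle `f`. -/
def koszulHomotopy (j : ι) (u : Finset ι → R) : Finset ι → R := fun H =>
  if j ∈ H then 0 else (-1 : k) ^ (H.filter fun i => i < j).card • u H

variable {k}

lemma koszulDiff_apply (c : ι → R) (f : Finset ι → R) (G : Finset ι) :
    koszulDiff k c f G =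
      ∑ j ∈ G, (-1 : k) ^ (G.filter fun i => i < j).card • (c j * f (G.erase j)) := by
  simp [koszulDiff]

lemma koszulDiff_mem {c : ι → R} {D : Finset ι → Submodule k R}
    (hmul : ∀ G, ∀ i ∈ G, ∀ a ∈ D (G.erase i), c i * a ∈ D G) {f : Finset ι → R}
    (hf : ∀ G, f G ∈ D G) (G : Finset ι) : koszulDiff k c f G ∈ D G := by
  rw [koszulDiff_apply]
  exact Submodule.sum_mem _ fun i hi => Submodule.smul_mem _ _ (hmul G i hi _ (hf _))

lemma koszulHomotopy_mem {D : Finset ι → Submodule k R} (j : ι) {u : Finset ι → R}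
    (hu : ∀ H, u H ∈ D H) (H : Finset ι) : koszulHomotopy k j u H ∈ D H := by
  unfold koszulHomotopy
  split_ifs
  exacts [Submodule.zero_mem _, Submodule.smul_mem _ _ (hu H)]

lemma card_filter_insert_lt {G : Finset ι} {i j : ι} (hj : j ∉ G) :
    ((insert j G).filter fun l => l < i).card =
      (G.filter fun l => l < i).card + if j < i then 1 else 0 := by
  rw [Finset.filter_insert]
  split_ifs
  · exact Finset.card_insert_of_notMem fun h => hj (Finset.mem_filter.1 h).1
  · rfl

lemma card_filter_erase_lt {G : Finset ι} {i j : ι} (hi : i ∈ G) :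
    ((G.erase i).filter fun l => l < j).card + (if i < j then 1 else 0) =
      (G.filter fun l => l < j).card := by
  rw [Finset.filter_erase]
  split_ifs with h
  · exact Finset.card_erase_add_one (Finset.mem_filter.2 ⟨hi, h⟩)
  · rw [add_zero, Finset.erase_eq_of_notMem (s := G.filter fun l => l < j) (a := i)
      fun hf => h (Finset.mem_filter.1 hf).2]

lemma neg_one_pow_koszul_sign {G : Finset ι} {i j : ι} (hi : i ∈ G) (hj : j ∉ G) :
    (-1 : k) ^ (G.filter fun l => l < i).card * (-1) ^ ((G.erase i).filter fun l => l < j).card =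
      -((-1) ^ (G.filter fun l => l < j).card *
        (-1) ^ ((insert j G).filter fun l => l < i).card) := by
  rw [← card_filter_erase_lt (j := j) hi, card_filter_insert_lt hj]
  rcases lt_or_gt_of_ne (ne_of_mem_of_not_mem hi hj) with h | h
  · simp only [if_pos h, if_neg (asymm h), pow_succ]; ring
  · simp only [if_neg (asymm h), if_pos h, pow_succ]; ring

lemma koszulDiff_koszulHomotopy_of_mem (c : ι → R) {j : ι} (u : Finset ι → R) {G : Finset ι}
    (hj : j ∈ G) : koszulDiff k c (koszulHomotopy k j u) G = c j * u (G.erase j) := by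
  rw [koszulDiff_apply, Finset.sum_eq_single_of_mem j hj fun i hi hij => by
    rw [koszulHomotopy, if_pos (Finset.mem_erase.2 ⟨Ne.symm hij, hj⟩), mul_zero, smul_zero]]
  have hs := card_filter_erase_lt (j := j) hj
  rw [if_neg (lt_irrefl j), add_zero] at hs
  rw [koszulHomotopy, if_neg (Finset.notMem_erase j G), hs, mul_smul_comm, smul_smul, ← pow_add,
    Even.neg_one_pow ⟨_, rfl⟩, one_smul]

lemma mul_koszulDiff_koszulHomotopy_of_notMem {c : ι → R} {f : Finset ι → R}
    (hf : koszulDiff k c f = 0) {j : ι} {u : Finset ι → R}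
    (hu : ∀ H, j ∉ H → c j * u H = f (insert j H)) {G : Finset ι} (hj : j ∉ G) :
    c j * koszulDiff k c (koszulHomotopy k j u) G = c j * f G := by
  have hcocycle := congrFun hf (insert j G)
  rw [koszulDiff_apply, Finset.sum_insert hj, Finset.erase_insert hj, Pi.zero_apply,
    card_filter_insert_lt hj, if_neg (lt_irrefl j), add_zero] at hcocycle
  have hterm : ∀ i ∈ G, c j * ((-1 : k) ^ (G.filter fun l => l < i).card •
      (c i * koszulHomotopy k j u (G.erase i))) = -(-1 : k) ^ (G.filter fun l => l < j).card •
        ((-1 : k) ^ ((insert j G).filter fun l => l < i).card •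
          (c i * f ((insert j G).erase i))) := fun i hi => by
    have hjGi : j ∉ G.erase i := fun h => hj (Finset.mem_of_mem_erase h)
    rw [koszulHomotopy, if_neg hjGi, mul_smul_comm, mul_smul_comm, mul_smul_comm, smul_smul,
      mul_left_comm, hu _ hjGi, neg_one_pow_koszul_sign hi hj, smul_smul, neg_mul,
      Finset.erase_insert_of_ne (ne_of_mem_of_not_mem hi hj).symm]
  rw [koszulDiff_apply, Finset.mul_sum, Finset.sum_congr rfl hterm, ← Finset.smul_sum,
    eq_neg_of_add_eq_zero_right hcocycle, smul_neg, neg_smul, neg_neg, smul_smul, ← pow_add,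
    Even.neg_one_pow ⟨_, rfl⟩, one_smul]

theorem ker_koszulDiff_inf_le_map {c : ι → R} {D : Finset ι → Submodule k R} (j : ι)
    (hmul : ∀ G, ∀ i ∈ G, ∀ a ∈ D (G.erase i), c i * a ∈ D G)
    (hinj : ∀ G, j ∉ G → ∀ a ∈ D G, c j * a = 0 → a = 0)
    (hsurj : ∀ G, j ∉ G → D (insert j G) ≤ (D G).map (LinearMap.mulLeft k (c j)))
    (t : ℕ) :
    LinearMap.ker (koszulDiff k c) ⊓ gradedCochains k D t ≤
      (gradedCochains k D (t - 1)).map (koszulDiff k c) := by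
  rintro f ⟨hf, hft⟩
  have hfG : ∀ G, f G ∈ if G.card = t then D G else ⊥ := fun G => hft G (Set.mem_univ G)
  have hfD : ∀ G, f G ∈ D G := fun G => by
    have := hfG G; split_ifs at this; exacts [this, (Submodule.mem_bot k).1 this ▸ zero_mem _]
  choose u huD hu using fun H => show ∃ v ∈ D H, j ∉ H → c j * v = f (insert j H) by
    by_cases hjH : j ∈ H
    · exact ⟨0, zero_mem _, absurd hjH⟩
    · obtain ⟨v, hv, hcv⟩ := hsurj H hjH (hfD _)
      exact ⟨v, hv, fun _ => hcv⟩
  refine ⟨koszulHomotopy k j u, fun H _ => ?_, funext fun G => ?_⟩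
  · change koszulHomotopy k j u H ∈ (if H.card = t - 1 then D H else ⊥ : Submodule k R)
    split_ifs with hH
    · exact koszulHomotopy_mem j huD H
    rw [Submodule.mem_bot, koszulHomotopy]
    split_ifs with hjH
    · rfl
    have hf0 : f (insert j H) = 0 := by
      have := hfG (insert j H)
      rwa [Finset.card_insert_of_notMem hjH, if_neg (by omega), Submodule.mem_bot] at this
    rw [hinj H hjH _ (huD H) ((hu H hjH).trans hf0), smul_zero]
  · by_cases hjG : j ∈ G
    · rw [koszulDiff_koszulHomotopy_of_mem c u hjG, hu _ (Finset.notMem_erase j G),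
        Finset.insert_erase hjG]
    · refine sub_eq_zero.1 (hinj G hjG _ (sub_mem (koszulDiff_mem hmul
        (koszulHomotopy_mem j huD) G) (hfD G)) ?_)
      rw [mul_sub, mul_koszulDiff_koszulHomotopy_of_notMem hf hu hjG, sub_self]

end Koszul

theorem extPiece_vanish_of_pos_entry
    (hP : IsSimplicialPoset P)
    (hinj : Function.Injective x) (hatom : ∀ i, IsAtom (x i))
    (hsurj : ∀ a : P, IsAtom a → ∃ i, x i = a)
    (ℓ : ℕ) (α : Fin n → ℤ)
    (hpos : ∃ j, 0 < α j) (t : ℕ) :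
    Subsingleton (ExtPiece P k n x ℓ t α) := by
  obtain ⟨j, hj⟩ := hpos
  have hx : IsAtomLabelling x := ⟨hinj, hatom, hsurj⟩
  set δ : Finset (Fin n) → Fin n → ℤ := fun G l => α l + if l ∈ G then (ℓ : ℤ) else 0
  have hδ : ∀ G i, i ∉ G → δ (insert i G) = δ G + Pi.single i (ℓ : ℤ) := by
    intro G i hi
    ext l
    by_cases hl : l = i
    · subst hl; simp [δ, hi]
    · simp [δ, hl]
  have hδj : ∀ G, j ∉ G → 0 < δ G j := fun G hG => by simpa [δ, hG] using hj
  rw [ExtPiece, Submodule.Quotient.subsingleton_iff, Submodule.comap_subtype_eq_top]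
  refine ker_koszulDiff_inf_le_map (D := fun G => facePiece P k n x (δ G)) j ?_ ?_ ?_ t
  · intro G i hi a ha
    have := map_fv_pow_mul_facePiece_le hx (δ (G.erase i)) i ℓ ⟨a, ha, rfl⟩
    rwa [← hδ _ _ (G.notMem_erase i), Finset.insert_erase hi] at this
  · exact fun G hG a ha => eq_zero_of_fv_pow_mul_eq_zero hP hx (hδj G hG) ha
  · intro G hG
    rw [hδ G j hG]
    exact facePiece_le_map_fv_pow_mul hP hx (hδj G hG) ℓ

end
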